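/- Over the phase hyperfield P, the polynomial p(T) = T^2 + T + 1 has infinitely many roots: every a = e^{iθ} with π/2 < θ < 3π/2 is a root of p. -/

import Mathlib

open Complex

/-- Hyperaddition of the phase hyperfield `P = S¹ ∪ {0} ⊆ ℂ` (realized as `ℂ/ℝ_{>0}`):
`c ∈ a ⊞ b` iff `c` is the normalization (a unit vector, or `0`) of `s•a + t•b` for some
positive reals `s, t`.  For unit (or zero) complex numbers this reproduces the rules
`x ⊞ 0 = {x}`, `a ⊞ (-a) = {0, a, -a}`, and `a ⊞ b = ` the open short arc between `a` and
`b` otherwise. -/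
def phadd (a b : ℂ) : Set ℂ :=
  {c | ∃ s t : ℝ, 0 < s ∧ 0 < t ∧
    ((s • a + t • b = 0 ∧ c = 0) ∨
      (s • a + t • b ≠ 0 ∧ c = (s • a + t • b) / ((‖s • a + t • b‖ : ℝ) : ℂ)))}

/-- The hypersum `⊞_{i=0}^n f i` in the phase hyperfield. -/
def phsum (f : ℕ → ℂ) : ℕ → Set ℂ
  | 0 => {f 0}
  | n + 1 => ⋃ b ∈ phsum f n, phadd b (f (n + 1))

/-! A unit `a` with `Re a < 0` is a root of `T² + T + 1`: since `a² - 2 Re(a) a + 1 = 0` and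
`-2 Re(a) > 0`, the unit `-a²` is a positive combination of `1` and `a`, so `-a² ∈ 1 ⊞ a`,
and `0 ∈ -a² ⊞ a²`. The roots `e^{iθ}`, `θ ∈ (π/2, π)`, are pairwise distinct since `cos` is
injective there. -/

lemma phsum_two (f : ℕ → ℂ) : phsum f 2 = ⋃ b ∈ phadd (f 0) (f 1), phadd b (f 2) := by
  simp [phsum]

lemma mem_phadd_of_smul_add_smul_eq {a b c : ℂ} {s t : ℝ} (hs : 0 < s) (ht : 0 < t)
    (h : s • a + t • b = c) (hc : ‖c‖ = 1) : c ∈ phadd a b :=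
  ⟨s, t, hs, ht, Or.inr ⟨h ▸ norm_ne_zero_iff.1 (hc ▸ one_ne_zero), by rw [h, hc]; simp⟩⟩

lemma zero_mem_phadd_neg_self (a : ℂ) : 0 ∈ phadd (-a) a :=
  ⟨1, 1, one_pos, one_pos, Or.inl ⟨by simp, rfl⟩⟩

lemma Complex.sq_sub_two_re_mul_add_normSq (a : ℂ) :
    a ^ 2 - 2 * (a.re : ℂ) * a + (normSq a : ℂ) = 0 := by
  have h := add_conj a
  push_cast at h
  linear_combination a * h - mul_conj a

lemma zero_mem_phsum_pow_two_of_re_neg {a : ℂ} (ha : ‖a‖ = 1) (hre : a.re < 0) :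
    0 ∈ phsum (fun i => a ^ i) 2 := by
  have hcomb : (1 : ℝ) • (1 : ℂ) + (-2 * a.re) • a = -a ^ 2 := by
    have hnormSq : (normSq a : ℂ) = 1 := by rw [normSq_eq_norm_sq, ha, one_pow, ofReal_one]
    simp only [real_smul, ofReal_one, ofReal_mul, ofReal_neg, ofReal_ofNat]
    linear_combination sq_sub_two_re_mul_add_normSq a - hnormSq
  have hunit : ‖-a ^ 2‖ = 1 := by rw [norm_neg, norm_pow, ha, one_pow]
  rw [phsum_two, Set.mem_iUnion₂]
  refine ⟨-a ^ 2, ?_, zero_mem_phadd_neg_self _⟩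
  simpa only [pow_zero, pow_one] using mem_phadd_of_smul_add_smul_eq one_pos (by linarith) hcomb hunit

lemma injOn_exp_ofReal_mul_I_Ioo :
    Set.InjOn (fun θ : ℝ => exp (θ * I)) (Set.Ioo (Real.pi / 2) Real.pi) := by
  refine Set.InjOn.of_comp (g := re) ?_
  have hcos : (re ∘ fun θ : ℝ => exp (θ * I)) = Real.cos := funext exp_ofReal_mul_I_re
  rw [hcos]
  exact Real.injOn_cos.mono fun θ hθ => Set.mem_Icc.2 ⟨by linarith [Real.pi_pos, hθ.1], hθ.2.le⟩

/-- Over the phase hyperfield, the polynomial `p(T) = T² + T + 1` has infinitely many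
roots: every `a = e^{iθ}` with `π/2 < θ < 3π/2` is a root of `p`
(i.e. `0 ∈ a² ⊞ a ⊞ 1`). -/
theorem phase_infinitely_many_roots :
    (∀ θ : ℝ, Real.pi / 2 < θ → θ < 3 * Real.pi / 2 →
      0 ∈ phsum (fun i => (Complex.exp (θ * Complex.I)) ^ i) 2) ∧
    {a : ℂ | 0 ∈ phsum (fun i => a ^ i) 2}.Infinite := by
  have root : ∀ θ : ℝ, Real.pi / 2 < θ → θ < 3 * Real.pi / 2 →
      0 ∈ phsum (fun i => (exp (θ * I)) ^ i) 2 := fun θ h₁ h₂ =>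
    zero_mem_phsum_pow_two_of_re_neg (norm_exp_ofReal_mul_I θ)
      (by rw [exp_ofReal_mul_I_re]; exact Real.cos_neg_of_pi_div_two_lt_of_lt h₁ (by linarith))
  refine ⟨root, Set.Infinite.mono ?_ ((Set.Ioo_infinite ?_).image injOn_exp_ofReal_mul_I_Ioo)⟩
  · rintro _ ⟨θ, hθ, rfl⟩
    exact root θ hθ.1 (by linarith [Real.pi_pos, hθ.2])
  · linarith [Real.pi_pos]
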